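/- Let X be a K-convex complex Banach space and p ∈ (1,∞). Then there exists c ∈ (0,∞) such that for every n,d,m ∈ ℕ with d + m ≤ n, every function f : {-1,1}^n → X of degree at most d + m which is also in the d-th tail space satisfies ‖Δf‖_{L_p({-1,1}^n;X)} ≥ c (d/m) ‖f‖_{L_p({-1,1}^n;X)}. -/

import Mathlib

open scoped BigOperators ENNReal NNReal

noncomputable section

namespace HammingCube

variable {X : Type*} [NormedAddCommGroup X] [NormedSpace ℂ X]

/-- The sign ±1 associated to a boolean coordinate. -/
def sgn (b : Bool) : ℝ := if b then 1 else -1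

/-- The Walsh function `w_A(ε) = ∏_{i ∈ A} ε_i`. -/
def walsh {n : ℕ} (A : Finset (Fin n)) (ε : Fin n → Bool) : ℝ := ∏ i ∈ A, sgn (ε i)

/-- The Fourier–Walsh coefficient `f̂(A) = 2⁻ⁿ ∑_δ f(δ) w_A(δ)`. -/
def coeff {n : ℕ} (f : (Fin n → Bool) → X) (A : Finset (Fin n)) : X :=
  (2 ^ n : ℝ)⁻¹ • ∑ δ : Fin n → Bool, walsh A δ • f δ

/-- `f` has degree at most `d`: `f̂(A) = 0` whenever `|A| > d`. -/
def degLE {n : ℕ} (f : (Fin n → Bool) → X) (d : ℕ) : Prop :=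
  ∀ A : Finset (Fin n), d < A.card → coeff f A = 0

/-- `f` belongs to the `d`-th tail space: `f̂(A) = 0` whenever `|A| < d`. -/
def tailSpace {n : ℕ} (f : (Fin n → Bool) → X) (d : ℕ) : Prop :=
  ∀ A : Finset (Fin n), A.card < d → coeff f A = 0

/-- The heat semigroup `e^{-tΔ} f = ∑_A e^{-t|A|} f̂(A) w_A`. -/
def heat {n : ℕ} (t : ℝ) (f : (Fin n → Bool) → X) : (Fin n → Bool) → X :=
  fun ε => ∑ A : Finset (Fin n), Real.exp (-t * A.card) • walsh A ε • coeff f A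

/-- The hypercube Laplacian `Δ f = ∑_A |A| f̂(A) w_A`. -/
def lap {n : ℕ} (f : (Fin n → Bool) → X) : (Fin n → Bool) → X :=
  fun ε => ∑ A : Finset (Fin n), (A.card : ℝ) • walsh A ε • coeff f A

/-- The fractional Laplacian `Δ^γ f = ∑_A |A|^γ f̂(A) w_A`. -/
def fracLap {n : ℕ} (γ : ℝ) (f : (Fin n → Bool) → X) : (Fin n → Bool) → X :=
  fun ε => ∑ A : Finset (Fin n), ((A.card : ℝ) ^ γ) • walsh A ε • coeff f A

/-- The `i`-th discrete partial derivative. -/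
def pderiv {n : ℕ} (i : Fin n) (f : (Fin n → Bool) → X) : (Fin n → Bool) → X :=
  fun ε => (2 : ℝ)⁻¹ • (f ε - f (Function.update ε i (!(ε i))))

/-- The vector-valued `L_p` norm `(2⁻ⁿ ∑_ε ‖f(ε)‖^p)^{1/p}` for finite `p`. -/
def lpNorm {n : ℕ} {Y : Type*} [NormedAddCommGroup Y] (p : ℝ)
    (f : (Fin n → Bool) → Y) : ℝ :=
  ((2 ^ n : ℝ)⁻¹ * ∑ ε : Fin n → Bool, ‖f ε‖ ^ p) ^ (1 / p)

/-- The `L_∞` norm `max_ε ‖f(ε)‖`. -/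
def linfNorm {n : ℕ} {Y : Type*} [NormedAddCommGroup Y]
    (f : (Fin n → Bool) → Y) : ℝ :=
  ⨆ ε : Fin n → Bool, ‖f ε‖

/-- The `L_p` norm for `p ∈ [1,∞]` encoded as `p : ℝ≥0∞`. -/
def lpNormE {n : ℕ} {Y : Type*} [NormedAddCommGroup Y] (p : ℝ≥0∞)
    (f : (Fin n → Bool) → Y) : ℝ :=
  if p = ⊤ then linfNorm f else lpNorm p.toReal f

/-- The scalar `L_p` norm of the gradient `‖(∑_i |∂_i f|²)^{1/2}‖_{L_p}`. -/
def gradLpNorm {n : ℕ} (p : ℝ) (f : (Fin n → Bool) → ℂ) : ℝ :=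
  lpNorm p (fun ε => Real.sqrt (∑ i : Fin n, ‖pderiv i f ε‖ ^ 2))

/-- The Rademacher projection `Rad f(ε) = ∑_i f̂({i}) ε_i`. -/
def Rad {n : ℕ} (f : (Fin n → Bool) → X) : (Fin n → Bool) → X :=
  fun ε => ∑ i : Fin n, sgn (ε i) • coeff f {i}

/-- A complex Banach space is `K`-convex if the Rademacher projections are uniformly
bounded on `L_q` for some `q ∈ (1,∞)`. -/
def KConvex (X : Type*) [NormedAddCommGroup X] [NormedSpace ℂ X] : Prop :=
  ∃ q : ℝ, 1 < q ∧ ∃ M : ℝ, ∀ (n : ℕ) (f : (Fin n → Bool) → X),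
    lpNorm q (Rad f) ≤ M * lpNorm q f

/-- `X` has cotype `q` with constant `C`. -/
def HasCotype (X : Type*) [NormedAddCommGroup X] [NormedSpace ℂ X] (q C : ℝ) : Prop :=
  ∀ (n : ℕ) (x : Fin n → X),
    C⁻¹ * (∑ i : Fin n, ‖x i‖ ^ q) ^ (1 / q) ≤
      ((2 ^ n : ℝ)⁻¹ * ∑ ε : Fin n → Bool, ‖∑ i : Fin n, sgn (ε i) • x i‖ ^ q) ^ (1 / q)

/-- The entropy `Ent(h)` of a nonnegative function on the cube. -/
def entropy {n : ℕ} (h : (Fin n → Bool) → ℝ) : ℝ :=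
  (2 ^ n : ℝ)⁻¹ * ∑ ε : Fin n → Bool, h ε * Real.log (h ε) -
    ((2 ^ n : ℝ)⁻¹ * ∑ ε : Fin n → Bool, h ε) *
      Real.log ((2 ^ n : ℝ)⁻¹ * ∑ ε : Fin n → Bool, h ε)

/-- The `L_∞` norm of the gradient `max_ε (∑_i |∂_i f(ε)|²)^{1/2}`. -/
def gradLinfNorm {n : ℕ} (f : (Fin n → Bool) → ℂ) : ℝ :=
  ⨆ ε : Fin n → Bool, Real.sqrt (∑ i : Fin n, ‖pderiv i f ε‖ ^ 2)


section Chunk1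

open Finset

variable {X : Type*} [NormedAddCommGroup X] [NormedSpace ℂ X] {n : ℕ}

lemma sgn_sq (b : Bool) : sgn b * sgn b = 1 := by cases b <;> simp [sgn]

lemma abs_sgn (b : Bool) : |sgn b| = 1 := by cases b <;> simp [sgn]

lemma walsh_eq_prod_univ (A : Finset (Fin n)) (ε : Fin n → Bool) :
    walsh A ε = ∏ i, (if i ∈ A then sgn (ε i) else 1) := by
  rw [walsh, Finset.prod_ite_mem, univ_inter]

lemma abs_walsh (A : Finset (Fin n)) (ε : Fin n → Bool) : |walsh A ε| = 1 := by
  rw [walsh, Finset.abs_prod]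
  exact Finset.prod_eq_one fun i _ => abs_sgn _

lemma sum_prod_bool (g : Fin n → Bool → ℝ) :
    ∑ ε : Fin n → Bool, ∏ i, g i (ε i) = ∏ i, (g i true + g i false) := by
  have : ∀ i : Fin n, g i true + g i false = ∑ b : Bool, g i b := by
    intro i; rw [Fintype.sum_bool]
  simp_rw [this]
  rw [Finset.prod_univ_sum]
  rw [← Fintype.piFinset_univ]

lemma kernel_expand (ρ : ℝ) (ε δ : Fin n → Bool) :
    ∑ A : Finset (Fin n), ρ ^ A.card * (walsh A ε * walsh A δ) =
      ∏ i, (1 + ρ * (sgn (ε i) * sgn (δ i))) := by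
  have h := Finset.prod_add (fun i : Fin n => ρ * (sgn (ε i) * sgn (δ i)))
    (fun _ => (1:ℝ)) Finset.univ
  simp only [Finset.prod_const_one, mul_one] at h
  calc ∑ A : Finset (Fin n), ρ ^ A.card * (walsh A ε * walsh A δ)
      = ∑ A ∈ Finset.univ.powerset, ∏ i ∈ A, (ρ * (sgn (ε i) * sgn (δ i))) := by
        rw [Finset.powerset_univ]
        refine Finset.sum_congr rfl fun A _ => ?_
        rw [Finset.prod_mul_distrib, Finset.prod_const, walsh, walsh,
          ← Finset.prod_mul_distrib]
    _ = ∏ i, (ρ * (sgn (ε i) * sgn (δ i)) + 1) := h.symm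
    _ = ∏ i, (1 + ρ * (sgn (ε i) * sgn (δ i))) := by simp_rw [add_comm]

end Chunk1

section Chunk2

open Finset

variable {X : Type*} [NormedAddCommGroup X] [NormedSpace ℂ X] {n : ℕ}

lemma sum_walsh_mul_walsh (A B : Finset (Fin n)) :
    ∑ ε : Fin n → Bool, walsh A ε * walsh B ε = if A = B then (2:ℝ) ^ n else 0 := by
  have key : ∑ ε : Fin n → Bool, walsh A ε * walsh B ε
      = ∏ i, (if (i ∈ A ↔ i ∈ B) then (2:ℝ) else 0) := by
    calc ∑ ε : Fin n → Bool, walsh A ε * walsh B ε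
        = ∑ ε : Fin n → Bool, ∏ i,
            ((if i ∈ A then sgn (ε i) else 1) * (if i ∈ B then sgn (ε i) else 1)) := by
          refine Finset.sum_congr rfl fun ε _ => ?_
          rw [walsh_eq_prod_univ, walsh_eq_prod_univ, ← Finset.prod_mul_distrib]
      _ = ∏ i, ((if i ∈ A then sgn true else 1) * (if i ∈ B then sgn true else 1)
            + (if i ∈ A then sgn false else 1) * (if i ∈ B then sgn false else 1)) :=
          sum_prod_bool (fun i b => (if i ∈ A then sgn b else 1) * (if i ∈ B then sgn b else 1))
      _ = ∏ i, (if (i ∈ A ↔ i ∈ B) then (2:ℝ) else 0) := by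
          refine Finset.prod_congr rfl fun i _ => ?_
          by_cases hA : i ∈ A <;> by_cases hB : i ∈ B <;> simp [hA, hB, sgn] <;> norm_num
  rw [key]
  by_cases hAB : A = B
  · subst hAB
    simp
  · have : ∃ i, ¬(i ∈ A ↔ i ∈ B) := by
      by_contra hc
      push_neg at hc
      exact hAB (Finset.ext fun i => (hc i))
    obtain ⟨i, hi⟩ := this
    rw [if_neg hAB]
    exact Finset.prod_eq_zero (Finset.mem_univ i) (by rw [if_neg hi])

lemma sum_walsh_same (ε δ : Fin n → Bool) :
    ∑ A : Finset (Fin n), walsh A ε * walsh A δ = if ε = δ then (2:ℝ) ^ n else 0 := by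
  have h := kernel_expand (1:ℝ) ε δ
  simp only [one_pow, one_mul] at h
  rw [h]
  by_cases hεδ : ε = δ
  · subst hεδ
    rw [if_pos rfl]
    calc ∏ i, (1 + sgn (ε i) * sgn (ε i)) = ∏ (_i : Fin n), (2:ℝ) := by
          refine Finset.prod_congr rfl fun i _ => ?_
          rw [sgn_sq]; ring
      _ = (2:ℝ) ^ n := by rw [Finset.prod_const, Finset.card_univ, Fintype.card_fin]
  · rw [if_neg hεδ]
    have : ∃ i, ε i ≠ δ i := by
      by_contra hc
      push_neg at hc
      exact hεδ (funext hc)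
    obtain ⟨i, hi⟩ := this
    refine Finset.prod_eq_zero (Finset.mem_univ i) ?_
    cases hε : ε i <;> cases hδ : δ i <;> simp_all [sgn]

lemma two_pow_ne (n : ℕ) : ((2:ℝ) ^ n) ≠ 0 := by positivity

lemma expansion (f : (Fin n → Bool) → X) (ε : Fin n → Bool) :
    ∑ A : Finset (Fin n), walsh A ε • coeff f A = f ε := by
  unfold coeff
  have step1 : ∀ A : Finset (Fin n),
      walsh A ε • ((2 ^ n : ℝ)⁻¹ • ∑ δ : Fin n → Bool, walsh A δ • f δ)
        = (2 ^ n : ℝ)⁻¹ • ∑ δ : Fin n → Bool, (walsh A ε * walsh A δ) • f δ := by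
    intro A
    rw [smul_comm, Finset.smul_sum]
    congr 1
    refine Finset.sum_congr rfl fun δ _ => ?_
    rw [smul_smul]
  simp_rw [step1]
  rw [← Finset.smul_sum, Finset.sum_comm]
  have step2 : ∀ δ : Fin n → Bool,
      ∑ A : Finset (Fin n), (walsh A ε * walsh A δ) • f δ
        = (if ε = δ then (2:ℝ)^n else 0) • f δ := by
    intro δ
    rw [← Finset.sum_smul, sum_walsh_same]
  simp_rw [step2, ite_smul, zero_smul]
  rw [Finset.sum_ite_eq]
  simp [smul_smul, inv_mul_cancel₀ (two_pow_ne n)]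

end Chunk2

section Chunk3

open Finset

variable {X : Type*} [NormedAddCommGroup X] [NormedSpace ℂ X] {n : ℕ}

/-- Fourier multiplier operator. -/
def mult (μ : ℕ → ℝ) (f : (Fin n → Bool) → X) : (Fin n → Bool) → X :=
  fun ε => ∑ A : Finset (Fin n), μ A.card • walsh A ε • coeff f A

lemma lap_eq_mult (f : (Fin n → Bool) → X) : lap f = mult (fun k => (k:ℝ)) f := rfl

lemma coeff_mult (μ : ℕ → ℝ) (f : (Fin n → Bool) → X) (A : Finset (Fin n)) :
    coeff (mult μ f) A = μ A.card • coeff f A := by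
  unfold coeff mult
  have step1 : ∀ δ : Fin n → Bool,
      walsh A δ • ∑ B : Finset (Fin n), μ B.card • walsh B δ • coeff f B
        = ∑ B : Finset (Fin n), (walsh A δ * walsh B δ) • μ B.card • coeff f B := by
    intro δ
    rw [Finset.smul_sum]
    refine Finset.sum_congr rfl fun B _ => ?_
    rw [smul_comm (μ B.card), smul_smul]
  simp_rw [step1]
  rw [Finset.sum_comm]
  have step2 : ∀ B : Finset (Fin n),
      ∑ δ : Fin n → Bool, (walsh A δ * walsh B δ) • μ B.card • coeff f B
        = (if A = B then (2:ℝ)^n else 0) • μ B.card • coeff f B := by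
    intro B
    rw [← Finset.sum_smul, sum_walsh_mul_walsh]
  simp_rw [step2, ite_smul, zero_smul]
  rw [Finset.sum_ite_eq]
  rw [if_pos (Finset.mem_univ A), smul_smul, inv_mul_cancel₀ (two_pow_ne n), one_smul]
  rfl

lemma mult_apply (μ : ℕ → ℝ) (f : (Fin n → Bool) → X) (ε : Fin n → Bool) :
    mult μ f ε = ∑ A : Finset (Fin n), μ A.card • walsh A ε • coeff f A := rfl

lemma mult_mult (μ ν : ℕ → ℝ) (f : (Fin n → Bool) → X) :
    mult μ (mult ν f) = mult (fun k => μ k * ν k) f := by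
  funext ε
  rw [mult_apply, mult_apply]
  refine Finset.sum_congr rfl fun A _ => ?_
  rw [coeff_mult, smul_comm (walsh A ε), smul_smul]

lemma mult_one (f : (Fin n → Bool) → X) : mult (fun _ => 1) f = f := by
  funext ε
  unfold mult
  simp_rw [one_smul]
  exact expansion f ε

lemma mult_sub_apply (μ ν : ℕ → ℝ) (f : (Fin n → Bool) → X) (ε : Fin n → Bool) :
    mult μ f ε - mult ν f ε = mult (fun k => μ k - ν k) f ε := by
  unfold mult
  rw [← Finset.sum_sub_distrib]
  refine Finset.sum_congr rfl fun A _ => ?_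
  rw [← sub_smul]

/-- The noise operator with parameter ρ. -/
def noise (ρ : ℝ) (f : (Fin n → Bool) → X) : (Fin n → Bool) → X :=
  mult (fun k => ρ ^ k) f

lemma noise_one (f : (Fin n → Bool) → X) : noise 1 f = f := by
  rw [noise]
  simp_rw [one_pow]
  exact mult_one f

lemma noise_noise (ρ σ : ℝ) (f : (Fin n → Bool) → X) :
    noise ρ (noise σ f) = noise (ρ * σ) f := by
  rw [noise, noise, noise, mult_mult]
  simp_rw [mul_pow]

lemma noise_kernel (ρ : ℝ) (f : (Fin n → Bool) → X) (ε : Fin n → Bool) :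
    noise ρ f ε = (2 ^ n : ℝ)⁻¹ •
      ∑ δ : Fin n → Bool, (∏ i, (1 + ρ * (sgn (ε i) * sgn (δ i)))) • f δ := by
  unfold noise mult coeff
  have step1 : ∀ A : Finset (Fin n),
      (ρ ^ A.card : ℝ) • walsh A ε • ((2 ^ n : ℝ)⁻¹ • ∑ δ : Fin n → Bool, walsh A δ • f δ)
        = (2 ^ n : ℝ)⁻¹ • ∑ δ : Fin n → Bool,
            (ρ ^ A.card * (walsh A ε * walsh A δ)) • f δ := by
    intro A
    rw [smul_smul, smul_comm, Finset.smul_sum]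
    congr 1
    refine Finset.sum_congr rfl fun δ _ => ?_
    rw [smul_smul, mul_assoc]
  simp_rw [step1]
  rw [← Finset.smul_sum, Finset.sum_comm]
  congr 1
  refine Finset.sum_congr rfl fun δ _ => ?_
  rw [← Finset.sum_smul, kernel_expand]

lemma kernel_nonneg {ρ : ℝ} (hρ₀ : 0 ≤ ρ) (hρ₁ : ρ ≤ 1) (ε δ : Fin n → Bool) :
    0 ≤ ∏ i, (1 + ρ * (sgn (ε i) * sgn (δ i))) := by
  refine Finset.prod_nonneg fun i _ => ?_
  have h1 : sgn (ε i) * sgn (δ i) = 1 ∨ sgn (ε i) * sgn (δ i) = -1 := by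
    cases hε : ε i <;> cases hδ : δ i <;> simp [sgn] <;> norm_num
  rcases h1 with h | h <;> rw [h] <;> nlinarith

lemma kernel_rowsum (ρ : ℝ) (ε : Fin n → Bool) :
    ∑ δ : Fin n → Bool, ∏ i, (1 + ρ * (sgn (ε i) * sgn (δ i))) = (2:ℝ) ^ n := by
  rw [sum_prod_bool (fun i b => 1 + ρ * (sgn (ε i) * sgn b))]
  calc ∏ i, ((1 + ρ * (sgn (ε i) * sgn true)) + (1 + ρ * (sgn (ε i) * sgn false)))
      = ∏ (_i : Fin n), (2:ℝ) := by
        refine Finset.prod_congr rfl fun i _ => ?_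
        simp [sgn]; ring
    _ = (2:ℝ) ^ n := by rw [Finset.prod_const, Finset.card_univ, Fintype.card_fin]

lemma kernel_colsum (ρ : ℝ) (δ : Fin n → Bool) :
    ∑ ε : Fin n → Bool, ∏ i, (1 + ρ * (sgn (ε i) * sgn (δ i))) = (2:ℝ) ^ n := by
  have hsymm : ∀ ε : Fin n → Bool, ∏ i, (1 + ρ * (sgn (ε i) * sgn (δ i)))
      = ∏ i, (1 + ρ * (sgn (δ i) * sgn (ε i))) := by
    intro ε
    refine Finset.prod_congr rfl fun i _ => ?_
    rw [mul_comm (sgn (ε i))]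
  simp_rw [hsymm]
  exact kernel_rowsum ρ δ

end Chunk3

section Chunk4

open Finset

variable {X : Type*} [NormedAddCommGroup X] [NormedSpace ℂ X] {n : ℕ}
variable {Y : Type*} [NormedAddCommGroup Y] {Z : Type*} [NormedAddCommGroup Z]

lemma lpNorm_nonneg {p : ℝ} (f : (Fin n → Bool) → Y) : 0 ≤ lpNorm p f := by
  unfold lpNorm
  apply Real.rpow_nonneg
  have : (0:ℝ) ≤ ∑ ε : Fin n → Bool, ‖f ε‖ ^ p :=
    Finset.sum_nonneg fun ε _ => Real.rpow_nonneg (norm_nonneg _) p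
  positivity

lemma lpNorm_mono {p : ℝ} (hp : 1 ≤ p) (f : (Fin n → Bool) → Y) (g : (Fin n → Bool) → Z)
    (h : ∀ ε, ‖f ε‖ ≤ ‖g ε‖) : lpNorm p f ≤ lpNorm p g := by
  unfold lpNorm
  have hp0 : (0:ℝ) ≤ 1 / p := div_nonneg zero_le_one (by linarith)
  have hsum : ∑ ε : Fin n → Bool, ‖f ε‖ ^ p ≤ ∑ ε : Fin n → Bool, ‖g ε‖ ^ p :=
    Finset.sum_le_sum fun ε _ => Real.rpow_le_rpow (norm_nonneg _) (h ε) (by linarith)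
  have h0 : (0:ℝ) ≤ ∑ ε : Fin n → Bool, ‖f ε‖ ^ p :=
    Finset.sum_nonneg fun ε _ => Real.rpow_nonneg (norm_nonneg _) p
  exact Real.rpow_le_rpow (by positivity)
    (mul_le_mul_of_nonneg_left hsum (by positivity)) hp0

lemma lpNorm_smul {W : Type*} [NormedAddCommGroup W] [NormedSpace ℝ W]
    {p : ℝ} (hp : 1 ≤ p) (r : ℝ) (f : (Fin n → Bool) → W) :
    lpNorm p (fun ε => r • f ε) = |r| * lpNorm p f := by
  have hp0 : p ≠ 0 := ne_of_gt (by linarith)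
  unfold lpNorm
  have h1 : ∀ ε : Fin n → Bool, ‖r • f ε‖ ^ p = |r| ^ p * ‖f ε‖ ^ p := by
    intro ε
    rw [norm_smul, Real.norm_eq_abs, Real.mul_rpow (abs_nonneg r) (norm_nonneg _)]
  simp_rw [h1]
  rw [← Finset.mul_sum, ← mul_assoc, mul_comm ((2:ℝ)^n)⁻¹ (|r|^p), mul_assoc]
  rw [Real.mul_rpow (by positivity) (by positivity)]
  rw [← Real.rpow_mul (abs_nonneg r), mul_one_div, div_self hp0, Real.rpow_one]

lemma lpNorm_le_of_forall_le {p : ℝ} (hp : 1 ≤ p) {f : (Fin n → Bool) → Y} {B : ℝ}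
    (hB : 0 ≤ B) (h : ∀ ε, ‖f ε‖ ≤ B) : lpNorm p f ≤ B := by
  have hp0 : p ≠ 0 := ne_of_gt (by linarith)
  have key : lpNorm p (fun _ : Fin n → Bool => B • (1:ℝ)) = B := by
    rw [lpNorm_smul hp]
    unfold lpNorm
    simp only [norm_one]
    rw [Real.one_rpow, Finset.sum_const, Finset.card_univ]
    have hcard : (Fintype.card (Fin n → Bool) : ℝ) = 2 ^ n := by
      rw [Fintype.card_fun, Fintype.card_bool, Fintype.card_fin]
      push_cast
      ring
    rw [nsmul_eq_mul, hcard, mul_one, inv_mul_cancel₀ (two_pow_ne n),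
      Real.one_rpow, mul_one, abs_of_nonneg hB]
  calc lpNorm p f ≤ lpNorm p (fun _ : Fin n → Bool => B • (1:ℝ)) := by
        apply lpNorm_mono hp
        intro ε
        simpa [abs_of_nonneg hB] using h ε
    _ = B := key

lemma lpNorm_add_le {p : ℝ} (hp : 1 ≤ p) (f g : (Fin n → Bool) → Y) :
    lpNorm p (fun ε => f ε + g ε) ≤ lpNorm p f + lpNorm p g := by
  have hp0 : p ≠ 0 := ne_of_gt (by linarith)
  set c : ℝ := (((2:ℝ) ^ n)⁻¹) ^ (1/p) with hc
  have hc0 : 0 ≤ c := Real.rpow_nonneg (by positivity) _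
  have hcp : c ^ p = ((2:ℝ) ^ n)⁻¹ := by
    rw [hc, ← Real.rpow_mul (by positivity), one_div, inv_mul_cancel₀ hp0, Real.rpow_one]
  have hrep : ∀ h : (Fin n → Bool) → Y,
      lpNorm p h = (∑ ε : Fin n → Bool, |c * ‖h ε‖| ^ p) ^ (1/p) := by
    intro h
    unfold lpNorm
    congr 1
    rw [Finset.mul_sum]
    refine Finset.sum_congr rfl fun ε _ => ?_
    rw [abs_of_nonneg (by positivity), Real.mul_rpow hc0 (norm_nonneg _), hcp]
  rw [hrep, hrep, hrep]
  calc (∑ ε : Fin n → Bool, |c * ‖f ε + g ε‖| ^ p) ^ (1/p)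
      ≤ (∑ ε : Fin n → Bool, |c * ‖f ε‖ + c * ‖g ε‖| ^ p) ^ (1/p) := by
        apply Real.rpow_le_rpow
        · exact Finset.sum_nonneg fun ε _ => Real.rpow_nonneg (abs_nonneg _) p
        · refine Finset.sum_le_sum fun ε _ => ?_
          apply Real.rpow_le_rpow (abs_nonneg _) _ (by linarith)
          rw [abs_of_nonneg (by positivity), abs_of_nonneg (by positivity), ← mul_add]
          have := norm_add_le (f ε) (g ε)
          nlinarith [hc0]
        · exact div_nonneg zero_le_one (by linarith)
    _ ≤ (∑ ε : Fin n → Bool, |c * ‖f ε‖| ^ p) ^ (1/p)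
        + (∑ ε : Fin n → Bool, |c * ‖g ε‖| ^ p) ^ (1/p) :=
        Real.Lp_add_le Finset.univ _ _ hp

lemma lpNorm_zero {p : ℝ} (hp : 1 ≤ p) :
    lpNorm p (fun _ : Fin n → Bool => (0:Y)) = 0 := by
  have hp0 : p ≠ 0 := ne_of_gt (by linarith)
  unfold lpNorm
  simp [Real.zero_rpow hp0, Real.zero_rpow (inv_ne_zero hp0)]

lemma lpNorm_sum_le {p : ℝ} (hp : 1 ≤ p) {ι : Type*} [DecidableEq ι] (s : Finset ι)
    (F : ι → (Fin n → Bool) → Y) :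
    lpNorm p (fun ε => ∑ j ∈ s, F j ε) ≤ ∑ j ∈ s, lpNorm p (F j) := by
  induction s using Finset.induction_on with
  | empty => simp [lpNorm_zero hp]
  | insert _ _ hx ih =>
    rename_i a s'
    simp_rw [Finset.sum_insert hx]
    calc lpNorm p (fun ε => F a ε + ∑ j ∈ s', F j ε)
        ≤ lpNorm p (F a) + lpNorm p (fun ε => ∑ j ∈ s', F j ε) := lpNorm_add_le hp _ _
      _ ≤ lpNorm p (F a) + ∑ j ∈ s', lpNorm p (F j) := by linarith

lemma lpNorm_sub_le {p : ℝ} (hp : 1 ≤ p) (f g : (Fin n → Bool) → Y) :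
    lpNorm p f - lpNorm p g ≤ lpNorm p (fun ε => f ε - g ε) := by
  have h := lpNorm_add_le hp (fun ε => f ε - g ε) g
  simp_rw [sub_add_cancel] at h
  linarith

end Chunk4

section Chunk5

open Finset

variable {X : Type*} [NormedAddCommGroup X] [NormedSpace ℂ X] {n : ℕ}

lemma noise_pointwise_le {ρ : ℝ} (h0 : 0 ≤ ρ) (h1 : ρ ≤ 1)
    (f : (Fin n → Bool) → X) (ε : Fin n → Bool) :
    ‖noise ρ f ε‖ ≤ ∑ δ : Fin n → Bool,
      ((2 ^ n : ℝ)⁻¹ * ∏ i, (1 + ρ * (sgn (ε i) * sgn (δ i)))) * ‖f δ‖ := by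
  rw [noise_kernel]
  rw [norm_smul, Real.norm_eq_abs, abs_of_nonneg (by positivity : (0:ℝ) ≤ ((2:ℝ)^n)⁻¹)]
  calc ((2:ℝ) ^ n)⁻¹ * ‖∑ δ : Fin n → Bool, (∏ i, (1 + ρ * (sgn (ε i) * sgn (δ i)))) • f δ‖
      ≤ ((2:ℝ) ^ n)⁻¹ * ∑ δ : Fin n → Bool, (∏ i, (1 + ρ * (sgn (ε i) * sgn (δ i)))) * ‖f δ‖ := by
        apply mul_le_mul_of_nonneg_left _ (by positivity)
        calc ‖∑ δ : Fin n → Bool, (∏ i, (1 + ρ * (sgn (ε i) * sgn (δ i)))) • f δ‖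
            ≤ ∑ δ : Fin n → Bool, ‖(∏ i, (1 + ρ * (sgn (ε i) * sgn (δ i)))) • f δ‖ :=
              norm_sum_le _ _
          _ = ∑ δ : Fin n → Bool, (∏ i, (1 + ρ * (sgn (ε i) * sgn (δ i)))) * ‖f δ‖ := by
              refine Finset.sum_congr rfl fun δ _ => ?_
              rw [norm_smul, Real.norm_eq_abs, abs_of_nonneg (kernel_nonneg h0 h1 ε δ)]
    _ = ∑ δ : Fin n → Bool,
          ((2 ^ n : ℝ)⁻¹ * ∏ i, (1 + ρ * (sgn (ε i) * sgn (δ i)))) * ‖f δ‖ := by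
        rw [Finset.mul_sum]
        refine Finset.sum_congr rfl fun δ _ => by ring

lemma lpNorm_noise_le {p : ℝ} (hp : 1 ≤ p) {ρ : ℝ} (h0 : 0 ≤ ρ) (h1 : ρ ≤ 1)
    (f : (Fin n → Bool) → X) : lpNorm p (noise ρ f) ≤ lpNorm p f := by
  set w : (Fin n → Bool) → (Fin n → Bool) → ℝ :=
    fun ε δ => (2 ^ n : ℝ)⁻¹ * ∏ i, (1 + ρ * (sgn (ε i) * sgn (δ i))) with hw
  have hwnonneg : ∀ ε δ, 0 ≤ w ε δ := fun ε δ =>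
    mul_nonneg (by positivity) (kernel_nonneg h0 h1 ε δ)
  have hwrow : ∀ ε, ∑ δ : Fin n → Bool, w ε δ = 1 := by
    intro ε
    rw [hw]
    simp only
    rw [← Finset.mul_sum, kernel_rowsum, inv_mul_cancel₀ (two_pow_ne n)]
  have hwcol : ∀ δ, ∑ ε : Fin n → Bool, w ε δ = 1 := by
    intro δ
    rw [hw]
    simp only
    rw [← Finset.mul_sum, kernel_colsum, inv_mul_cancel₀ (two_pow_ne n)]
  have key : ∀ ε, ‖noise ρ f ε‖ ^ p ≤ ∑ δ : Fin n → Bool, w ε δ * ‖f δ‖ ^ p := by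
    intro ε
    calc ‖noise ρ f ε‖ ^ p ≤ (∑ δ : Fin n → Bool, w ε δ * ‖f δ‖) ^ p := by
          apply Real.rpow_le_rpow (norm_nonneg _) _ (by linarith)
          exact noise_pointwise_le h0 h1 f ε
      _ ≤ ∑ δ : Fin n → Bool, w ε δ * ‖f δ‖ ^ p :=
          Real.rpow_arith_mean_le_arith_mean_rpow Finset.univ (w ε) (fun δ => ‖f δ‖)
            (fun δ _ => hwnonneg ε δ) (hwrow ε) (fun δ _ => norm_nonneg _) hp
  have sum_le : ∑ ε : Fin n → Bool, ‖noise ρ f ε‖ ^ p ≤ ∑ δ : Fin n → Bool, ‖f δ‖ ^ p := by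
    calc ∑ ε : Fin n → Bool, ‖noise ρ f ε‖ ^ p
        ≤ ∑ ε : Fin n → Bool, ∑ δ : Fin n → Bool, w ε δ * ‖f δ‖ ^ p :=
          Finset.sum_le_sum fun ε _ => key ε
      _ = ∑ δ : Fin n → Bool, (∑ ε : Fin n → Bool, w ε δ) * ‖f δ‖ ^ p := by
          rw [Finset.sum_comm]
          refine Finset.sum_congr rfl fun δ _ => ?_
          rw [Finset.sum_mul]
      _ = ∑ δ : Fin n → Bool, ‖f δ‖ ^ p := by
          refine Finset.sum_congr rfl fun δ _ => ?_
          rw [hwcol δ, one_mul]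
  unfold lpNorm
  apply Real.rpow_le_rpow
  · have : (0:ℝ) ≤ ∑ ε : Fin n → Bool, ‖noise ρ f ε‖ ^ p :=
      Finset.sum_nonneg fun ε _ => Real.rpow_nonneg (norm_nonneg _) p
    positivity
  · exact mul_le_mul_of_nonneg_left sum_le (by positivity)
  · exact div_nonneg zero_le_one (by linarith)

end Chunk5

section Chunk6

open Finset

variable {X : Type*} [NormedAddCommGroup X] [NormedSpace ℂ X] {n : ℕ}

lemma coeff_sub (f g : (Fin n → Bool) → X) (A : Finset (Fin n)) :
    coeff (fun ε => f ε - g ε) A = coeff f A - coeff g A := by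
  unfold coeff
  rw [← smul_sub, ← Finset.sum_sub_distrib]
  congr 1
  refine Finset.sum_congr rfl fun δ _ => ?_
  rw [smul_sub]

lemma noise_sub_fun (ρ : ℝ) (f g : (Fin n → Bool) → X) (ε : Fin n → Bool) :
    noise ρ (fun δ => f δ - g δ) ε = noise ρ f ε - noise ρ g ε := by
  unfold noise
  rw [mult_apply, mult_apply, mult_apply, ← Finset.sum_sub_distrib]
  refine Finset.sum_congr rfl fun A _ => ?_
  rw [coeff_sub, smul_sub, smul_sub]

lemma mult_norm_le (μ : ℕ → ℝ) (f : (Fin n → Bool) → X) (ε : Fin n → Bool) :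
    ‖mult μ f ε‖ ≤ ∑ A : Finset (Fin n), |μ A.card| * ‖coeff f A‖ := by
  rw [mult_apply]
  refine le_trans (norm_sum_le _ _) (Finset.sum_le_sum fun A _ => ?_)
  rw [norm_smul, norm_smul, Real.norm_eq_abs, Real.norm_eq_abs, abs_walsh, one_mul]

lemma lpNorm_mult_le {p : ℝ} (hp : 1 ≤ p) (μ : ℕ → ℝ) (f : (Fin n → Bool) → X) :
    lpNorm p (mult μ f) ≤ ∑ A : Finset (Fin n), |μ A.card| * ‖coeff f A‖ := by
  apply lpNorm_le_of_forall_le hp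
  · exact Finset.sum_nonneg fun A _ => mul_nonneg (abs_nonneg _) (norm_nonneg _)
  · exact mult_norm_le μ f

lemma geom_ineq1 {r : ℝ} (h0 : 0 ≤ r) (h1 : r ≤ 1) (k : ℕ) :
    1 - r ^ k ≤ (k : ℝ) * (1 - r) := by
  induction k with
  | zero => simp
  | succ k ih =>
    have hrk : r ^ k ≤ 1 := pow_le_one₀ h0 h1
    have hrk0 : 0 ≤ r ^ k := pow_nonneg h0 k
    push_cast
    rw [pow_succ]
    nlinarith

lemma geom_ineq2 {r : ℝ} (h0 : 0 ≤ r) (h1 : r ≤ 1) (k : ℕ) :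
    |(1 - r) * (k : ℝ) - (1 - r ^ k)| ≤ (k : ℝ) ^ 2 * (1 - r) ^ 2 := by
  have hnonneg : ∀ m : ℕ, 0 ≤ (1 - r) * (m : ℝ) - (1 - r ^ m) := by
    intro m
    induction m with
    | zero => simp
    | succ m ih =>
      have hrm : r ^ m ≤ 1 := pow_le_one₀ h0 h1
      push_cast
      rw [pow_succ]
      nlinarith
  rw [abs_of_nonneg (hnonneg k)]
  induction k with
  | zero => simp
  | succ k ih =>
    have hrk : r ^ k ≤ 1 := pow_le_one₀ h0 h1
    have hrk0 : 0 ≤ r ^ k := pow_nonneg h0 k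
    have hstep : 1 - r ^ k ≤ (k : ℝ) * (1 - r) := geom_ineq1 h0 h1 k
    push_cast
    rw [pow_succ]
    nlinarith [sq_nonneg (1 - r), Nat.cast_nonneg (α := ℝ) k]

lemma smul_mult (c : ℝ) (μ : ℕ → ℝ) (f : (Fin n → Bool) → X) (ε : Fin n → Bool) :
    c • mult μ f ε = mult (fun k => c * μ k) f ε := by
  rw [mult_apply, mult_apply, Finset.smul_sum]
  refine Finset.sum_congr rfl fun A _ => ?_
  rw [smul_smul]

/-- The constant `C_f = ∑_A |A|² ‖f̂(A)‖`. -/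
def specConst (f : (Fin n → Bool) → X) : ℝ :=
  ∑ A : Finset (Fin n), ((A.card : ℝ)) ^ 2 * ‖coeff f A‖

lemma specConst_nonneg (f : (Fin n → Bool) → X) : 0 ≤ specConst f :=
  Finset.sum_nonneg fun A _ => mul_nonneg (by positivity) (norm_nonneg _)

lemma one_sub_noise_single {p : ℝ} (hp : 1 ≤ p) {r : ℝ} (h0 : 0 ≤ r) (h1 : r ≤ 1)
    (f : (Fin n → Bool) → X) :
    lpNorm p (fun ε => f ε - noise r f ε) ≤
      (1 - r) * lpNorm p (lap f) + (1 - r) ^ 2 * specConst f := by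
  have hEdef : ∀ ε, f ε - noise r f ε =
      (1 - r) • lap f ε + -(((1 - r) • lap f ε) - (f ε - noise r f ε)) := by
    intro ε; abel
  have hsub : ∀ ε, f ε - noise r f ε = mult (fun k => 1 - r ^ k) f ε := by
    intro ε
    have h1 : f ε = mult (fun _ => (1:ℝ)) f ε := by rw [mult_one]
    rw [noise, h1]
    exact mult_sub_apply _ _ f ε
  have hE : ∀ ε, ((1 - r) • lap f ε) - (f ε - noise r f ε)
      = mult (fun k => (1 - r) * (k : ℝ) - (1 - r ^ k)) f ε := by
    intro ε
    rw [hsub ε, lap_eq_mult, smul_mult, mult_sub_apply]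
  calc lpNorm p (fun ε => f ε - noise r f ε)
      ≤ lpNorm p (fun ε => (1 - r) • lap f ε)
        + lpNorm p (fun ε => -(((1 - r) • lap f ε) - (f ε - noise r f ε))) := by
        calc lpNorm p (fun ε => f ε - noise r f ε)
            = lpNorm p (fun ε => (1 - r) • lap f ε
                + -(((1 - r) • lap f ε) - (f ε - noise r f ε))) := by
              congr 1
              funext ε
              exact hEdef ε
          _ ≤ _ := lpNorm_add_le hp _ _
    _ ≤ (1 - r) * lpNorm p (lap f) + (1 - r) ^ 2 * specConst f := by
        have t1 : lpNorm p (fun ε => (1 - r) • lap f ε) = |1 - r| * lpNorm p (lap f) :=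
          lpNorm_smul hp (1 - r) (lap f)
        have t2 : lpNorm p (fun ε => -(((1 - r) • lap f ε) - (f ε - noise r f ε)))
            ≤ (1 - r) ^ 2 * specConst f := by
          apply lpNorm_le_of_forall_le hp
          · exact mul_nonneg (by positivity) (specConst_nonneg f)
          · intro ε
            rw [norm_neg, hE ε]
            refine le_trans (mult_norm_le _ f ε) ?_
            rw [specConst, Finset.mul_sum]
            refine Finset.sum_le_sum fun A _ => ?_
            have := geom_ineq2 h0 h1 A.card
            have hnn : (0:ℝ) ≤ ‖coeff f A‖ := norm_nonneg _
            nlinarith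
        rw [t1, abs_of_nonneg (by linarith : (0:ℝ) ≤ 1 - r)]
        linarith [t2]

lemma one_sub_noise_pow {p : ℝ} (hp : 1 ≤ p) {r : ℝ} (h0 : 0 ≤ r) (h1 : r ≤ 1)
    (f : (Fin n → Bool) → X) (N : ℕ) :
    lpNorm p (fun ε => f ε - noise (r ^ N) f ε) ≤
      (N : ℝ) * lpNorm p (fun ε => f ε - noise r f ε) := by
  have htel : ∀ ε, f ε - noise (r ^ N) f ε
      = ∑ i ∈ Finset.range N, noise (r ^ i) (fun δ => f δ - noise r f δ) ε := by
    intro ε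
    have hterm : ∀ i, noise (r ^ i) (fun δ => f δ - noise r f δ) ε
        = noise (r ^ i) f ε - noise (r ^ (i+1)) f ε := by
      intro i
      rw [noise_sub_fun]
      congr 1
      have : noise (r ^ i) (noise r f) = noise (r ^ i * r) f := noise_noise _ _ f
      rw [this, ← pow_succ]
    simp_rw [hterm]
    rw [Finset.sum_range_sub' (fun i => noise (r ^ i) f ε) N]
    have h1' : noise (r ^ 0) f ε = f ε := by
      rw [pow_zero, noise_one]
    rw [h1']
  calc lpNorm p (fun ε => f ε - noise (r ^ N) f ε)
      = lpNorm p (fun ε => ∑ i ∈ Finset.range N,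
          noise (r ^ i) (fun δ => f δ - noise r f δ) ε) := by
        congr 1
        funext ε
        exact htel ε
    _ ≤ ∑ i ∈ Finset.range N,
          lpNorm p (noise (r ^ i) (fun δ => f δ - noise r f δ)) :=
        lpNorm_sum_le hp _ _
    _ ≤ ∑ _i ∈ Finset.range N, lpNorm p (fun δ => f δ - noise r f δ) :=
        Finset.sum_le_sum fun i _ =>
          lpNorm_noise_le hp (pow_nonneg h0 i) (pow_le_one₀ h0 h1) _
    _ = (N : ℝ) * lpNorm p (fun ε => f ε - noise r f ε) := by
        rw [Finset.sum_const, Finset.card_range, nsmul_eq_mul]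

lemma key_heat_ineq {p : ℝ} (hp : 1 ≤ p) {σ : ℝ} (h0 : 0 < σ) (h1 : σ ≤ 1)
    (f : (Fin n → Bool) → X) :
    lpNorm p (fun ε => f ε - noise σ f ε) ≤ Real.log σ⁻¹ * lpNorm p (lap f) := by
  have hlog0 : 0 ≤ Real.log σ⁻¹ := by
    apply Real.log_nonneg
    rw [le_inv_comm₀] <;> simp [h0, h1]
  apply le_of_forall_pos_le_add
  intro η hη
  obtain ⟨N, hN⟩ := exists_nat_gt ((Real.log σ⁻¹) ^ 2 * specConst f / η)
  have hN0 : 0 < (N : ℝ) := lt_of_le_of_lt (div_nonneg (mul_nonneg (sq_nonneg _) (specConst_nonneg f)) hη.le) hN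
  have hNnat : N ≠ 0 := by
    intro h; rw [h] at hN0; norm_num at hN0
  set r : ℝ := σ ^ ((N : ℝ)⁻¹) with hr
  have hr0 : 0 < r := Real.rpow_pos_of_pos h0 _
  have hr1 : r ≤ 1 := Real.rpow_le_one h0.le h1 (inv_nonneg.mpr hN0.le)
  have hrN : r ^ N = σ := by
    rw [hr, ← Real.rpow_natCast (σ ^ ((N:ℝ)⁻¹)) N, ← Real.rpow_mul h0.le,
      inv_mul_cancel₀ (by exact_mod_cast hNnat), Real.rpow_one]
  have hlogr : 1 - r ≤ (N : ℝ)⁻¹ * Real.log σ⁻¹ := by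
    have := Real.log_le_sub_one_of_pos hr0
    have hlr : Real.log r = (N : ℝ)⁻¹ * Real.log σ := Real.log_rpow h0 _
    rw [Real.log_inv]
    nlinarith [hlr, this]
  have h1r : 0 ≤ 1 - r := by linarith
  calc lpNorm p (fun ε => f ε - noise σ f ε)
      = lpNorm p (fun ε => f ε - noise (r ^ N) f ε) := by rw [hrN]
    _ ≤ (N : ℝ) * lpNorm p (fun ε => f ε - noise r f ε) :=
        one_sub_noise_pow hp hr0.le hr1 f N
    _ ≤ (N : ℝ) * ((1 - r) * lpNorm p (lap f) + (1 - r) ^ 2 * specConst f) := by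
        apply mul_le_mul_of_nonneg_left (one_sub_noise_single hp hr0.le hr1 f) hN0.le
    _ ≤ Real.log σ⁻¹ * lpNorm p (lap f) + η := by
        have hK0 : 0 ≤ lpNorm p (lap f) := lpNorm_nonneg _
        have hterm1 : (N : ℝ) * ((1 - r) * lpNorm p (lap f))
            ≤ Real.log σ⁻¹ * lpNorm p (lap f) := by
          have : (N : ℝ) * (1 - r) ≤ Real.log σ⁻¹ := by
            have := mul_le_mul_of_nonneg_left hlogr hN0.le
            calc (N:ℝ) * (1 - r) ≤ (N:ℝ) * ((N : ℝ)⁻¹ * Real.log σ⁻¹) := this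
              _ = Real.log σ⁻¹ := by field_simp
          nlinarith
        have hterm2 : (N : ℝ) * ((1 - r) ^ 2 * specConst f) ≤ η := by
          have hsq : (1 - r) ^ 2 ≤ ((N : ℝ)⁻¹ * Real.log σ⁻¹) ^ 2 := by
            apply sq_le_sq' _ hlogr
            nlinarith [mul_nonneg (inv_nonneg.mpr hN0.le) hlog0]
          have hC := specConst_nonneg f
          have step : (N : ℝ) * ((1 - r) ^ 2 * specConst f)
              ≤ (N : ℝ) * (((N : ℝ)⁻¹ * Real.log σ⁻¹) ^ 2 * specConst f) := by
            apply mul_le_mul_of_nonneg_left _ hN0.le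
            exact mul_le_mul_of_nonneg_right hsq hC
          have expand : (N : ℝ) * (((N : ℝ)⁻¹ * Real.log σ⁻¹) ^ 2 * specConst f)
              = (Real.log σ⁻¹) ^ 2 * specConst f / (N : ℝ) := by
            field_simp
          rw [expand] at step
          have : (Real.log σ⁻¹) ^ 2 * specConst f / (N : ℝ) ≤ η := by
            rw [div_le_iff₀ hN0]
            have h2 : (Real.log σ⁻¹) ^ 2 * specConst f / η < N := hN
            rw [div_lt_iff₀ hη] at h2
            nlinarith
          linarith
        nlinarith [mul_nonneg hN0.le (mul_nonneg (mul_nonneg h1r h1r) (specConst_nonneg f))]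

end Chunk6

section Chunk7

open Finset

variable {X : Type*} [NormedAddCommGroup X] [NormedSpace ℂ X] {n : ℕ}

/-- Degree part of `f` at level `k`. -/
def gpart (f : (Fin n → Bool) → X) (k : ℕ) : (Fin n → Bool) → X :=
  fun ε => ∑ A ∈ Finset.univ.filter (fun A : Finset (Fin n) => A.card = k), walsh A ε • coeff f A

/-- The window polynomial `G(ρ) = ∑_{j=0}^m ρ^j g_{d+j}`. -/
def Gfun (f : (Fin n → Bool) → X) (d m : ℕ) (ρ : ℝ) : (Fin n → Bool) → X :=
  fun ε => ∑ j ∈ Finset.range (m+1), ρ ^ j • gpart f (d + j) ε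

lemma window_decomp {f : (Fin n → Bool) → X} {d m : ℕ} (hd : 1 ≤ d)
    (hdeg : degLE f (d + m)) (htail : tailSpace f d) (ρ : ℝ) (ε : Fin n → Bool) :
    noise ρ f ε = ρ ^ d • Gfun f d m ρ ε := by
  have hzero : ∀ A : Finset (Fin n), ¬(d ≤ A.card ∧ A.card ≤ d + m) →
      (ρ ^ A.card • walsh A ε • coeff f A) = 0 := by
    intro A hA
    push_neg at hA
    by_cases h : d ≤ A.card
    · rw [hdeg A (hA h), smul_zero, smul_zero]
    · rw [htail A (by omega), smul_zero, smul_zero]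
  have lhs_eq : noise ρ f ε = ∑ A ∈ Finset.univ.filter
      (fun A : Finset (Fin n) => d ≤ A.card ∧ A.card ≤ d + m),
        ρ ^ A.card • walsh A ε • coeff f A := by
    rw [noise, mult_apply]
    refine (Finset.sum_filter_of_ne ?_).symm
    intro A _ hne
    by_contra hc
    exact hne (hzero A hc)
  rw [lhs_eq]
  have maps : ∀ A ∈ Finset.univ.filter
      (fun A : Finset (Fin n) => d ≤ A.card ∧ A.card ≤ d + m),
      A.card - d ∈ Finset.range (m+1) := by
    intro A hA
    simp only [Finset.mem_filter] at hA
    simp only [Finset.mem_range]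
    omega
  rw [← Finset.sum_fiberwise_of_maps_to maps (fun A => ρ ^ A.card • walsh A ε • coeff f A)]
  rw [Gfun, Finset.smul_sum]
  refine Finset.sum_congr rfl fun j hj => ?_
  simp only [Finset.mem_range] at hj
  have hfib : (Finset.univ.filter
        (fun A : Finset (Fin n) => d ≤ A.card ∧ A.card ≤ d + m)).filter
        (fun A => A.card - d = j)
      = Finset.univ.filter (fun A : Finset (Fin n) => A.card = d + j) := by
    ext A
    simp only [Finset.mem_filter, Finset.mem_univ, true_and]
    omega
  rw [hfib, gpart, smul_smul, Finset.smul_sum]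
  refine Finset.sum_congr rfl fun A hA => ?_
  simp only [Finset.mem_filter, Finset.mem_univ, true_and] at hA
  rw [hA, pow_add, smul_smul]

lemma lagrange_monomial {m : ℕ} (v : Fin (m+1) → ℝ) (hv : Function.Injective v)
    (y : ℝ) (i : ℕ) (hi : i ≤ m) :
    y ^ i = ∑ j : Fin (m+1), Polynomial.eval y (Lagrange.basis Finset.univ v j) * (v j) ^ i := by
  have hvs : Set.InjOn v (Finset.univ : Finset (Fin (m+1))) := fun a _ b _ h => hv h
  have hdeg : (Polynomial.X ^ i : Polynomial ℝ).degree < (Finset.univ : Finset (Fin (m+1))).card := by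
    rw [Polynomial.degree_X_pow, Finset.card_univ, Fintype.card_fin]
    exact_mod_cast Nat.lt_succ_of_le hi
  have h := Lagrange.eq_interpolate hvs hdeg
  have := congrArg (Polynomial.eval y) h
  rw [Lagrange.interpolate_apply, Polynomial.eval_finset_sum] at this
  simp only [Polynomial.eval_mul, Polynomial.eval_C, Polynomial.eval_pow,
    Polynomial.eval_X] at this
  rw [this]
  refine Finset.sum_congr rfl fun j _ => mul_comm _ _

lemma G_interpolate {f : (Fin n → Bool) → X} {d m : ℕ}
    (v : Fin (m+1) → ℝ) (hv : Function.Injective v) (y : ℝ) (ε : Fin n → Bool) :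
    Gfun f d m y ε = ∑ j : Fin (m+1),
      Polynomial.eval y (Lagrange.basis Finset.univ v j) • Gfun f d m (v j) ε := by
  unfold Gfun
  have swap : ∑ j : Fin (m+1), Polynomial.eval y (Lagrange.basis Finset.univ v j) •
        ∑ i ∈ Finset.range (m+1), (v j) ^ i • gpart f (d + i) ε
      = ∑ i ∈ Finset.range (m+1),
          (∑ j : Fin (m+1), Polynomial.eval y (Lagrange.basis Finset.univ v j) * (v j) ^ i) •
            gpart f (d + i) ε := by
    simp_rw [Finset.smul_sum, smul_smul]
    rw [Finset.sum_comm]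
    refine Finset.sum_congr rfl fun i _ => ?_
    rw [Finset.sum_smul]
  rw [swap]
  refine Finset.sum_congr rfl fun i hi => ?_
  simp only [Finset.mem_range] at hi
  rw [← lagrange_monomial v hv y i (by omega)]

end Chunk7

section Chunk8

open Finset

lemma nat_prod1 (j : ℕ) : ∏ k ∈ Finset.range j, (j - k) = Nat.factorial j := by
  have h := Finset.prod_range_reflect (fun k => j - k) j
  have h2 : ∀ k ∈ Finset.range j, j - (j - 1 - k) = k + 1 := by
    intro k hk
    simp only [Finset.mem_range] at hk
    omega
  rw [← h, Finset.prod_congr rfl h2, Finset.prod_range_add_one_eq_factorial]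

lemma nat_prod2 (j m : ℕ) : ∏ k ∈ Finset.Ico (j+1) (m+1), (k - j) = Nat.factorial (m - j) := by
  rcases le_or_gt (j+1) (m+1) with h | h
  · rw [Finset.prod_Ico_eq_prod_range]
    have h2 : ∀ i ∈ Finset.range (m + 1 - (j + 1)), (j + 1 + i) - j = i + 1 := by
      intro i _; omega
    rw [Finset.prod_congr rfl h2, Finset.prod_range_add_one_eq_factorial]
    congr 1
    omega
  · have : m + 1 ≤ j + 1 := by omega
    rw [Finset.Ico_eq_empty (by omega), Finset.prod_empty]
    have : m - j = 0 := by omega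
    rw [this, Nat.factorial_zero]

lemma real_prod_abs {m : ℕ} (j : Fin (m+1)) :
    ∏ k ∈ Finset.univ.erase j, |((j:ℕ):ℝ) - ((k:ℕ):ℝ)| =
      ((Nat.factorial (j:ℕ)) * (Nat.factorial (m - (j:ℕ))) : ℕ) := by
  have step1 : ∏ k ∈ Finset.univ.erase j, |((j:ℕ):ℝ) - ((k:ℕ):ℝ)|
      = ∏ k ∈ Finset.univ.erase j,
          (if k = j then 1 else |((j:ℕ):ℝ) - ((k:ℕ):ℝ)|) := by
    refine Finset.prod_congr rfl fun k hk => ?_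
    rw [if_neg (Finset.mem_erase.mp hk).1]
  have step2 : ∏ k ∈ (Finset.univ : Finset (Fin (m+1))),
        (if k = j then 1 else |((j:ℕ):ℝ) - ((k:ℕ):ℝ)|)
      = ∏ k ∈ Finset.range (m+1), (if k = (j:ℕ) then 1 else |((j:ℕ):ℝ) - (k:ℝ)|) := by
    rw [← Fin.prod_univ_eq_prod_range (fun k => if k = (j:ℕ) then 1 else |((j:ℕ):ℝ) - (k:ℝ)|) (m+1)]
    refine Finset.prod_congr rfl fun k _ => ?_
    congr 1
    · simp [Fin.ext_iff]
  have e1 : ∏ k ∈ Finset.univ.erase j, (if k = j then 1 else |((j:ℕ):ℝ) - ((k:ℕ):ℝ)|)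
      = ∏ k : Fin (m+1), (if k = j then 1 else |((j:ℕ):ℝ) - ((k:ℕ):ℝ)|) :=
    Finset.prod_erase Finset.univ (by simp)
  rw [step1, e1, step2]
  -- now compute the range product
  set jv := (j : ℕ) with hjv
  have hjm : jv ≤ m := Nat.lt_succ_iff.mp j.isLt
  have split : ∏ k ∈ Finset.range (m+1), (if k = jv then 1 else |(jv:ℝ) - (k:ℝ)|)
      = (∏ k ∈ Finset.range (jv+1), (if k = jv then 1 else |(jv:ℝ) - (k:ℝ)|))
        * ∏ k ∈ Finset.Ico (jv+1) (m+1), (if k = jv then 1 else |(jv:ℝ) - (k:ℝ)|) := by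
    rw [Finset.prod_range_mul_prod_Ico _ (by omega : jv + 1 ≤ m + 1)]
  rw [split, Finset.prod_range_succ, if_pos rfl, mul_one]
  have left : ∏ k ∈ Finset.range jv, (if k = jv then 1 else |(jv:ℝ) - (k:ℝ)|)
      = ((Nat.factorial jv : ℕ) : ℝ) := by
    rw [← nat_prod1 jv, Nat.cast_prod]
    refine Finset.prod_congr rfl fun k hk => ?_
    simp only [Finset.mem_range] at hk
    rw [if_neg (by omega)]
    have hklt : (k:ℝ) < (jv:ℝ) := Nat.cast_lt.mpr hk
    rw [abs_of_pos (by linarith : (0:ℝ) < (jv:ℝ) - (k:ℝ))]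
    push_cast [Nat.cast_sub (le_of_lt hk)]
    ring
  have right : ∏ k ∈ Finset.Ico (jv+1) (m+1), (if k = jv then 1 else |(jv:ℝ) - (k:ℝ)|)
      = ((Nat.factorial (m - jv) : ℕ) : ℝ) := by
    rw [← nat_prod2 jv m, Nat.cast_prod]
    refine Finset.prod_congr rfl fun k hk => ?_
    simp only [Finset.mem_Ico] at hk
    rw [if_neg (by omega)]
    have hklt : (jv:ℝ) < (k:ℝ) := Nat.cast_lt.mpr (by omega)
    rw [abs_of_neg (by linarith : (jv:ℝ) - (k:ℝ) < 0)]
    push_cast [Nat.cast_sub (by omega : jv ≤ k)]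
    ring
  rw [left, right]
  push_cast
  ring

end Chunk8

section Chunk9

open Finset

lemma factorial_bound (m : ℕ) : ((m:ℝ)) ^ m / (Nat.factorial m : ℝ) ≤ Real.exp 1 ^ m := by
  have h1 : ((m:ℝ)) ^ m / (Nat.factorial m : ℝ) ≤ Real.exp (m : ℝ) := by
    have := Real.sum_le_exp_of_nonneg (by positivity : (0:ℝ) ≤ (m:ℝ)) (m+1)
    have hterm : ((m:ℝ)) ^ m / (Nat.factorial m : ℝ)
        ≤ ∑ i ∈ Finset.range (m+1), (m:ℝ) ^ i / (Nat.factorial i : ℝ) := by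
      apply Finset.single_le_sum (f := fun i => (m:ℝ) ^ i / (Nat.factorial i : ℝ))
      · intro i _
        positivity
      · exact Finset.self_mem_range_succ m
    calc ((m:ℝ)) ^ m / (Nat.factorial m : ℝ)
        ≤ ∑ i ∈ Finset.range (m+1), (m:ℝ) ^ i / (Nat.factorial i : ℝ) := hterm
      _ ≤ Real.exp (m:ℝ) := by
          refine le_trans (le_of_eq ?_) this
          refine Finset.sum_congr rfl fun i _ => ?_
          norm_num
    
  have h2 : Real.exp ((m:ℝ)) = Real.exp 1 ^ m := by
    rw [← Real.exp_nat_mul, mul_one]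
  rw [← h2]
  exact h1

lemma sum_inv_factorials (m : ℕ) :
    ∑ j ∈ Finset.range (m+1),
        ((Nat.factorial j * Nat.factorial (m - j) : ℕ) : ℝ)⁻¹
      = 2 ^ m / (Nat.factorial m : ℝ) := by
  have key : ∀ j ∈ Finset.range (m+1),
      ((Nat.factorial j * Nat.factorial (m - j) : ℕ) : ℝ)⁻¹
        = (Nat.choose m j : ℝ) / (Nat.factorial m : ℝ) := by
    intro j hj
    simp only [Finset.mem_range] at hj
    have hle : j ≤ m := by omega
    have hcast : (Nat.choose m j : ℝ) * ((Nat.factorial j : ℕ) : ℝ)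
        * ((Nat.factorial (m - j) : ℕ) : ℝ) = ((Nat.factorial m : ℕ) : ℝ) := by
      exact_mod_cast congrArg (Nat.cast (R := ℝ)) (Nat.choose_mul_factorial_mul_factorial hle)
    have hne1 : ((Nat.factorial j * Nat.factorial (m - j) : ℕ) : ℝ) ≠ 0 := by
      positivity
    have hne2 : ((Nat.factorial m : ℕ) : ℝ) ≠ 0 := by positivity
    field_simp
    push_cast at hcast ⊢
    nlinarith [hcast]
  rw [Finset.sum_congr rfl key, ← Finset.sum_div]
  congr 1
  have := Nat.sum_range_choose m
  exact_mod_cast congrArg (Nat.cast (R := ℝ)) this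

lemma lagrange_sum_bound {m : ℕ} (hm : 1 ≤ m) {a y : ℝ} (ha0 : 0 < a) (ha1 : a < 1)
    (hy0 : 0 < y) (hya : y < a) :
    ∑ j : Fin (m+1), |Polynomial.eval y (Lagrange.basis Finset.univ
        (fun k : Fin (m+1) => a + ((k:ℕ):ℝ) * ((1-a)/m)) j)|
      ≤ (2 * Real.exp 1 * (1 - y) / (1 - a)) ^ m := by
  set h : ℝ := (1-a)/m with hh
  have hm0 : (0:ℝ) < m := by exact_mod_cast hm
  have hh0 : 0 < h := by rw [hh]; exact div_pos (by linarith) hm0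
  set v : Fin (m+1) → ℝ := fun k => a + ((k:ℕ):ℝ) * h with hv
  have hy1 : y < 1 := lt_trans hya ha1
  have step1 : ∀ j : Fin (m+1), |Polynomial.eval y (Lagrange.basis Finset.univ v j)|
      ≤ ((1-y)/h) ^ m * ((Nat.factorial (j:ℕ) * Nat.factorial (m - (j:ℕ)) : ℕ) : ℝ)⁻¹ := by
    intro j
    have heval : Polynomial.eval y (Lagrange.basis Finset.univ v j)
        = ∏ k ∈ Finset.univ.erase j, ((v j - v k)⁻¹ * (y - v k)) := by
      rw [Lagrange.basis, Polynomial.eval_prod]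
      refine Finset.prod_congr rfl fun k _ => ?_
      rw [Lagrange.basisDivisor]
      simp [Polynomial.eval_mul, Polynomial.eval_C, Polynomial.eval_sub, Polynomial.eval_X]
    rw [heval, Finset.abs_prod]
    have hbound : ∀ k ∈ Finset.univ.erase j,
        |(v j - v k)⁻¹ * (y - v k)| ≤ ((1-y)/h) * |((j:ℕ):ℝ) - ((k:ℕ):ℝ)|⁻¹ := by
      intro k hk
      have hkj : k ≠ j := (Finset.mem_erase.mp hk).1
      have habs0 : 0 < |((j:ℕ):ℝ) - ((k:ℕ):ℝ)| := by
        rw [abs_pos]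
        intro hc
        have : ((j:ℕ):ℝ) = ((k:ℕ):ℝ) := by linarith [sub_eq_zero.mp hc]
        exact hkj (Fin.ext (by exact_mod_cast this.symm))
      have hvk1 : v k ≤ 1 := by
        have h1 : ((k:ℕ):ℝ) ≤ m := by exact_mod_cast Nat.lt_succ_iff.mp k.isLt
        have hmh : (m:ℝ) * h = 1 - a := by rw [hh]; field_simp
        have : ((k:ℕ):ℝ) * h ≤ (m:ℝ) * h := by nlinarith
        show a + ((k:ℕ):ℝ) * h ≤ 1
        nlinarith
      have hvky : y < v k := by
        have : (0:ℝ) ≤ ((k:ℕ):ℝ) * h := by positivity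
        show y < a + ((k:ℕ):ℝ) * h
        nlinarith
      have hden : |v j - v k| = |((j:ℕ):ℝ) - ((k:ℕ):ℝ)| * h := by
        have e : v j - v k = (((j:ℕ):ℝ) - ((k:ℕ):ℝ)) * h := by
          show a + ((j:ℕ):ℝ) * h - (a + ((k:ℕ):ℝ) * h) = _
          ring
        rw [e, abs_mul, abs_of_pos hh0]
      calc |(v j - v k)⁻¹ * (y - v k)|
          = |y - v k| / (|((j:ℕ):ℝ) - ((k:ℕ):ℝ)| * h) := by
            rw [abs_mul, abs_inv, hden, mul_comm, ← div_eq_mul_inv]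
        _ ≤ (1 - y) / (|((j:ℕ):ℝ) - ((k:ℕ):ℝ)| * h) := by
            have hnum : |y - v k| ≤ 1 - y := by
              rw [abs_of_neg (by linarith : y - v k < 0), neg_sub]
              linarith
            rw [div_eq_mul_inv, div_eq_mul_inv]
            exact mul_le_mul_of_nonneg_right hnum (by positivity)
        _ = ((1-y)/h) * |((j:ℕ):ℝ) - ((k:ℕ):ℝ)|⁻¹ := by
            rw [mul_comm (|((j:ℕ):ℝ) - ((k:ℕ):ℝ)|) h, ← div_div,
              div_eq_mul_inv ((1-y)/h)]
    calc ∏ k ∈ Finset.univ.erase j, |(v j - v k)⁻¹ * (y - v k)|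
        ≤ ∏ k ∈ Finset.univ.erase j, (((1-y)/h) * |((j:ℕ):ℝ) - ((k:ℕ):ℝ)|⁻¹) :=
          Finset.prod_le_prod (fun k _ => abs_nonneg _) hbound
      _ = ((1-y)/h) ^ m * ((Nat.factorial (j:ℕ) * Nat.factorial (m - (j:ℕ)) : ℕ) : ℝ)⁻¹ := by
          rw [Finset.prod_mul_distrib, Finset.prod_const]
          have hcard : (Finset.univ.erase j).card = m := by
            rw [Finset.card_erase_of_mem (Finset.mem_univ j), Finset.card_univ,
              Fintype.card_fin]
            omega
          rw [hcard, Finset.prod_inv_distrib, real_prod_abs j]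
  calc ∑ j : Fin (m+1), |Polynomial.eval y (Lagrange.basis Finset.univ v j)|
      ≤ ∑ j : Fin (m+1),
          ((1-y)/h) ^ m * ((Nat.factorial (j:ℕ) * Nat.factorial (m - (j:ℕ)) : ℕ) : ℝ)⁻¹ :=
        Finset.sum_le_sum fun j _ => step1 j
    _ = ((1-y)/h) ^ m * (2 ^ m / (Nat.factorial m : ℝ)) := by
        rw [← Finset.mul_sum]
        congr 1
        rw [Fin.sum_univ_eq_sum_range
          (fun j => ((Nat.factorial j * Nat.factorial (m - j) : ℕ) : ℝ)⁻¹) (m+1)]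
        exact sum_inv_factorials m
    _ ≤ (2 * Real.exp 1 * (1 - y) / (1 - a)) ^ m := by
        have e1 : (1-y)/h = (m:ℝ) * ((1-y)/(1-a)) := by
          rw [hh]
          field_simp
        rw [e1]
        have hc0 : (0:ℝ) < (1-y)/(1-a) := by
          apply div_pos <;> linarith
        calc ((m:ℝ) * ((1-y)/(1-a))) ^ m * (2 ^ m / (Nat.factorial m : ℝ))
            = (2 * ((1-y)/(1-a))) ^ m * ((m:ℝ) ^ m / (Nat.factorial m : ℝ)) := by
              rw [mul_pow, mul_pow]
              ring
          _ ≤ (2 * ((1-y)/(1-a))) ^ m * (Real.exp 1) ^ m := by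
              apply mul_le_mul_of_nonneg_left (factorial_bound m) (by positivity)
          _ = (2 * Real.exp 1 * (1 - y) / (1 - a)) ^ m := by
              rw [← mul_pow]
              congr 1
              field_simp

end Chunk9

section Chunk10

open Finset

lemma exp_neg_upper {x : ℝ} (hx : 0 ≤ x) : 1 - Real.exp (-x) ≤ x := by
  have := Real.add_one_le_exp (-x)
  linarith

lemma exp_neg_lower {x : ℝ} (hx0 : 0 ≤ x) (hx1 : x ≤ 1) : x/2 ≤ 1 - Real.exp (-x) := by
  have h := Real.add_one_le_exp x
  have hex : 0 < Real.exp x := Real.exp_pos x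
  have hmul : Real.exp (-x) * Real.exp x = 1 := by
    rw [← Real.exp_add]; simp
  nlinarith [hmul, h, hex, mul_nonneg hx0 (by linarith : (0:ℝ) ≤ 1 - x)]

lemma numeric_final {m : ℕ} (hm : 1 ≤ m) :
    (8 * Real.exp 1) ^ m * Real.exp (5*(m:ℝ)) * 2 ≤ Real.exp (10*(m:ℝ)) := by
  have hE2 : (2:ℝ) ≤ Real.exp 1 := by
    have := Real.exp_one_gt_d9
    linarith
  have hE0 : (0:ℝ) < Real.exp 1 := Real.exp_pos 1
  have h5 : Real.exp (5*(m:ℝ)) = Real.exp 1 ^ (5*m) := by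
    rw [← Real.exp_nat_mul]
    congr 1
    push_cast
    ring
  have h10 : Real.exp (10*(m:ℝ)) = Real.exp 1 ^ (10*m) := by
    rw [← Real.exp_nat_mul]
    congr 1
    push_cast
    ring
  rw [h5, h10]
  calc (8*Real.exp 1)^m * Real.exp 1 ^ (5*m) * 2
      = (8^m * 2) * (Real.exp 1 ^ m * Real.exp 1 ^ (5*m)) := by
        rw [mul_pow]
        ring
    _ ≤ (16^m) * (Real.exp 1 ^ m * Real.exp 1 ^ (5*m)) := by
        apply mul_le_mul_of_nonneg_right _ (by positivity)
        have h2m : (2:ℝ) ≤ 2^m := by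
          calc (2:ℝ) = 2^1 := (pow_one 2).symm
            _ ≤ 2^m := pow_le_pow_right₀ (by norm_num) hm
        calc (8:ℝ)^m * 2 ≤ 8^m * 2^m := by
              nlinarith [pow_pos (by norm_num : (0:ℝ) < 8) m]
          _ = 16^m := by rw [← mul_pow]; norm_num
    _ ≤ ((Real.exp 1)^4)^m * (Real.exp 1 ^ m * Real.exp 1 ^ (5*m)) := by
        apply mul_le_mul_of_nonneg_right _ (by positivity)
        apply pow_le_pow_left₀ (by norm_num)
        calc (16:ℝ) = 2^4 := by norm_num
          _ ≤ (Real.exp 1)^4 := pow_le_pow_left₀ (by norm_num) hE2 4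
    _ = Real.exp 1 ^ (10*m) := by
        rw [← pow_mul, ← pow_add, ← pow_add]
        congr 1
        ring

set_option maxHeartbeats 1000000 in
theorem stmt9_main {X : Type*} [NormedAddCommGroup X] [NormedSpace ℂ X]
    (p : ℝ) (hp : 1 < p) :
    ∃ c : ℝ, 0 < c ∧
      ∀ n d m : ℕ, 1 ≤ d → 1 ≤ m → d + m ≤ n →
        ∀ f : (Fin n → Bool) → X, degLE f (d + m) → tailSpace f d →
          c * ((d : ℝ) / (m : ℝ)) * lpNorm p f ≤ lpNorm p (lap f) := by
  refine ⟨1/20, by norm_num, ?_⟩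
  intro n d m hd hm hnm f hdeg htail
  have hp1 : 1 ≤ p := hp.le
  set F := lpNorm p f with hF
  set K := lpNorm p (lap f) with hK
  have hF0 : 0 ≤ F := lpNorm_nonneg f
  have hK0 : 0 ≤ K := lpNorm_nonneg (lap f)
  have hd0 : (0:ℝ) < d := by exact_mod_cast hd
  have hm0 : (0:ℝ) < m := by exact_mod_cast hm
  by_contra hcon
  push_neg at hcon
  have hFpos : 0 < F := by
    rcases lt_or_eq_of_le hF0 with h | h
    · exact h
    · exfalso
      rw [← h, mul_zero] at hcon
      exact absurd hcon (not_lt.mpr hK0)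
  set sR : ℝ := 5*(m:ℝ) with hsR
  set tR : ℝ := 10*(m:ℝ) with htR
  have hs0 : 0 < sR := by rw [hsR]; positivity
  have ht0 : 0 < tR := by rw [htR]; positivity
  have hst : sR < tR := by rw [hsR, htR]; nlinarith
  set a : ℝ := Real.exp (-(sR/d)) with ha
  set y : ℝ := Real.exp (-(tR/d)) with hy
  have ha0 : 0 < a := Real.exp_pos _
  have hy0 : 0 < y := Real.exp_pos _
  have hsd0 : 0 < sR/d := div_pos hs0 hd0
  have htd0 : 0 < tR/d := div_pos ht0 hd0
  have hsdtd : sR/d < tR/d := by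
    rw [div_eq_mul_inv, div_eq_mul_inv]
    exact mul_lt_mul_of_pos_right hst (inv_pos.mpr hd0)
  have ha1 : a < 1 := by
    rw [ha, ← Real.exp_zero]
    apply Real.exp_lt_exp.mpr
    linarith
  have hya : y < a := by
    rw [hy, ha]
    apply Real.exp_lt_exp.mpr
    linarith
  have hy1' : y ≤ 1 := by
    rw [hy, ← Real.exp_zero]
    apply Real.exp_le_exp.mpr
    linarith
  have hyd : y ^ d = Real.exp (-tR) := by
    rw [hy, ← Real.exp_nat_mul]
    congr 1
    field_simp
  have had : a ^ d = Real.exp (-sR) := by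
    rw [ha, ← Real.exp_nat_mul]
    congr 1
    field_simp
  -- heat flow bound
  have hlog : Real.log y⁻¹ = tR/d := by
    rw [hy, ← Real.exp_neg, Real.log_exp]
    ring
  have h1 : lpNorm p (fun ε => f ε - noise y f ε) ≤ (tR/d) * K := by
    have h := key_heat_ineq hp1 hy0 hy1' f
    rw [hlog] at h
    exact h
  have h2 : F - (tR/d) * K ≤ lpNorm p (noise y f) := by
    have hsub := lpNorm_sub_le hp1 f (noise y f)
    linarith
  have h3 : (tR/d) * K < F/2 := by
    have heq : (tR/d) * (1/20 * ((d:ℝ)/m) * F) = F/2 := by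
      rw [htR]
      field_simp
      ring
    calc (tR/d) * K < (tR/d) * (1/20 * ((d:ℝ)/m) * F) :=
          mul_lt_mul_of_pos_left hcon htd0
      _ = F/2 := heq
  -- window decomposition at y
  have hwindowy : noise y f = fun ε => (y ^ d) • Gfun f d m y ε :=
    funext (window_decomp hd hdeg htail y)
  have hNGy : lpNorm p (noise y f) = y ^ d * lpNorm p (Gfun f d m y) := by
    rw [hwindowy, lpNorm_smul hp1, abs_of_pos (pow_pos hy0 d)]
  have hNy : F/2 < Real.exp (-tR) * lpNorm p (Gfun f d m y) := by
    rw [← hyd, ← hNGy]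
    linarith
  have hGylower : Real.exp tR * (F/2) < lpNorm p (Gfun f d m y) := by
    have h4 : Real.exp tR * (F/2)
        < Real.exp tR * (Real.exp (-tR) * lpNorm p (Gfun f d m y)) :=
      mul_lt_mul_of_pos_left hNy (Real.exp_pos tR)
    have h5 : Real.exp tR * (Real.exp (-tR) * lpNorm p (Gfun f d m y))
        = lpNorm p (Gfun f d m y) := by
      rw [← mul_assoc, ← Real.exp_add]
      simp
    linarith
  -- nodes
  set hstep : ℝ := (1-a)/m with hhstep
  have hh0 : 0 < hstep := by rw [hhstep]; exact div_pos (by linarith) hm0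
  set v : Fin (m+1) → ℝ := fun k => a + ((k:ℕ):ℝ) * ((1-a)/(m:ℝ)) with hv
  have hvdef : ∀ k : Fin (m+1), v k = a + ((k:ℕ):ℝ) * hstep := by
    intro k; rw [hv, hhstep]
  have hvinj : Function.Injective v := by
    intro k k' hkk
    have h1 : a + ((k:ℕ):ℝ) * hstep = a + ((k':ℕ):ℝ) * hstep := by
      rw [← hvdef, ← hvdef, hkk]
    have h2 : ((k:ℕ):ℝ) * hstep = ((k':ℕ):ℝ) * hstep := by linarith
    have h3 : ((k:ℕ):ℝ) = ((k':ℕ):ℝ) := mul_right_cancel₀ (ne_of_gt hh0) h2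
    exact Fin.ext (by exact_mod_cast h3)
  have hva : ∀ k : Fin (m+1), a ≤ v k := by
    intro k
    rw [hvdef]
    have : (0:ℝ) ≤ ((k:ℕ):ℝ) * hstep := by positivity
    linarith
  have hv1 : ∀ k : Fin (m+1), v k ≤ 1 := by
    intro k
    rw [hvdef]
    have h1 : ((k:ℕ):ℝ) ≤ m := by exact_mod_cast Nat.lt_succ_iff.mp k.isLt
    have hmh : (m:ℝ) * hstep = 1 - a := by
      rw [hhstep]; field_simp
    have h2 : ((k:ℕ):ℝ) * hstep ≤ (m:ℝ) * hstep := mul_le_mul_of_nonneg_right h1 hh0.le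
    linarith
  have hv0 : ∀ k : Fin (m+1), 0 < v k := fun k => lt_of_lt_of_le ha0 (hva k)
  -- node norm bounds
  have hnodes : ∀ k : Fin (m+1),
      lpNorm p (Gfun f d m (v k)) ≤ Real.exp sR * F := by
    intro k
    have hwk : noise (v k) f = fun ε => ((v k) ^ d) • Gfun f d m (v k) ε :=
      funext (window_decomp hd hdeg htail (v k))
    have hNk : lpNorm p (noise (v k) f) = (v k)^d * lpNorm p (Gfun f d m (v k)) := by
      rw [hwk, lpNorm_smul hp1, abs_of_pos (pow_pos (hv0 k) d)]
    have hcontr : lpNorm p (noise (v k) f) ≤ F := lpNorm_noise_le hp1 (hv0 k).le (hv1 k) f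
    have hak : a ^ d ≤ (v k)^d := pow_le_pow_left₀ ha0.le (hva k) d
    have hadpos : 0 < a ^ d := pow_pos ha0 d
    have hNG : lpNorm p (Gfun f d m (v k)) ≤ F / a^d := by
      rw [le_div_iff₀ hadpos]
      calc lpNorm p (Gfun f d m (v k)) * a^d
          ≤ lpNorm p (Gfun f d m (v k)) * (v k)^d :=
            mul_le_mul_of_nonneg_left hak (lpNorm_nonneg _)
        _ = lpNorm p (noise (v k) f) := by rw [hNk]; ring
        _ ≤ F := hcontr
    calc lpNorm p (Gfun f d m (v k)) ≤ F / a^d := hNG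
      _ = Real.exp sR * F := by
          rw [had, Real.exp_neg, div_eq_mul_inv, inv_inv, mul_comm]
  -- interpolation
  have hinterp : lpNorm p (Gfun f d m y)
      ≤ (∑ j : Fin (m+1), |Polynomial.eval y (Lagrange.basis Finset.univ v j)|)
        * (Real.exp sR * F) := by
    have hGeq : Gfun f d m y = fun ε => ∑ j : Fin (m+1),
        Polynomial.eval y (Lagrange.basis Finset.univ v j) • Gfun f d m (v j) ε :=
      funext (G_interpolate v hvinj y)
    rw [hGeq]
    calc lpNorm p (fun ε => ∑ j : Fin (m+1),
            Polynomial.eval y (Lagrange.basis Finset.univ v j) • Gfun f d m (v j) ε)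
        ≤ ∑ j : Fin (m+1), lpNorm p (fun ε =>
            Polynomial.eval y (Lagrange.basis Finset.univ v j) • Gfun f d m (v j) ε) :=
          lpNorm_sum_le hp1 Finset.univ _
      _ ≤ ∑ j : Fin (m+1), |Polynomial.eval y (Lagrange.basis Finset.univ v j)|
            * (Real.exp sR * F) := by
          refine Finset.sum_le_sum fun j _ => ?_
          rw [lpNorm_smul hp1]
          exact mul_le_mul_of_nonneg_left (hnodes j) (abs_nonneg _)
      _ = (∑ j : Fin (m+1), |Polynomial.eval y (Lagrange.basis Finset.univ v j)|)
            * (Real.exp sR * F) := by rw [Finset.sum_mul]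
  -- Lagrange sum bound
  have hlag := lagrange_sum_bound hm ha0 ha1 hy0 hya
  rw [← hv] at hlag
  -- base bound
  have hcase : 1 - y ≤ 4 * (1 - a) := by
    rcases le_or_gt (sR/d) 1 with hc | hc
    · have hl := exp_neg_lower hsd0.le hc
      have hu := exp_neg_upper htd0.le
      rw [← ha] at hl
      rw [← hy] at hu
      have htd2 : tR/d = 2*(sR/d) := by
        rw [htR, hsR]
        ring
      linarith
    · have he2 : (2:ℝ) ≤ Real.exp 1 := by
        have := Real.exp_one_gt_d9
        linarith
      have ha12 : a ≤ 1/2 := by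
        have h6 : a ≤ Real.exp (-1) := by
          rw [ha]
          apply Real.exp_le_exp.mpr
          linarith
        have hinv : Real.exp (-1) * Real.exp 1 = 1 := by
          rw [← Real.exp_add]; simp
        nlinarith [Real.exp_pos (-1)]
      linarith
  have hbase0 : (0:ℝ) ≤ 2 * Real.exp 1 * (1-y) / (1-a) := by
    apply div_nonneg _ (by linarith)
    have := Real.exp_pos 1
    nlinarith
  have hbase : 2 * Real.exp 1 * (1-y) / (1-a) ≤ 8 * Real.exp 1 := by
    rw [div_le_iff₀ (by linarith : (0:ℝ) < 1 - a)]
    nlinarith [Real.exp_pos 1]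
  have hpow : (2 * Real.exp 1 * (1-y) / (1-a)) ^ m ≤ (8 * Real.exp 1) ^ m :=
    pow_le_pow_left₀ hbase0 hbase m
  -- final contradiction
  have hchain : Real.exp tR * (F/2) < (8 * Real.exp 1)^m * (Real.exp sR * F) := by
    calc Real.exp tR * (F/2) < lpNorm p (Gfun f d m y) := hGylower
      _ ≤ (∑ j : Fin (m+1), |Polynomial.eval y (Lagrange.basis Finset.univ v j)|)
            * (Real.exp sR * F) := hinterp
      _ ≤ (8 * Real.exp 1)^m * (Real.exp sR * F) := by
          apply mul_le_mul_of_nonneg_right _ (by positivity)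
          exact le_trans hlag hpow
  have hnum := numeric_final hm
  rw [← hsR, ← htR] at hnum
  nlinarith [hnum, hchain, hFpos, pow_pos (mul_pos (by norm_num : (0:ℝ) < 8) (Real.exp_pos 1)) m,
    Real.exp_pos sR, Real.exp_pos tR]

end Chunk10

/-- **Reverse Bernstein–Markov inequality for the Laplacian** on `K`-convex spaces, for
functions with spectrum in `{d, …, d+m}`. -/
theorem stmt9 {X : Type*} [NormedAddCommGroup X] [NormedSpace ℂ X] [CompleteSpace X]
    (hX : KConvex X) (p : ℝ) (hp : 1 < p) :
    ∃ c : ℝ, 0 < c ∧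
      ∀ n d m : ℕ, 1 ≤ d → 1 ≤ m → d + m ≤ n →
        ∀ f : (Fin n → Bool) → X, degLE f (d + m) → tailSpace f d →
          c * ((d : ℝ) / (m : ℝ)) * lpNorm p f ≤ lpNorm p (lap f) := by
  exact stmt9_main p hp

end HammingCube
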